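/- arXiv:2506.21926 — 7 statements merged into one kernel-verified Lean document; each statement's English description precedes it below -/
import Mathlib

section
/- In a quadrilateral with vertices p1, p, p', pi (in order), if both p and p' lie strictly between the vertical lines through p1 and pi, then at least one of the interior angles at p or p' is at least 90 degrees; consequently if |p1 p'| ≤ 1 and the angle at p is at least 90°, then |p p'| ≤ |p1 p'| ≤ 1. -/
/-!
With `a = p - p1`, `u = p' - p`, `b = pi - p'`, the planar identities
`u₀ ⟪a, u⟫ + u₁ (a × u) = a₀ ‖u‖²` and `u₀ ⟪u, b⟫ - u₁ (u × b) = b₀ ‖u‖²` show that if both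
angles were acute (`⟪a, u⟫ < 0`, `⟪u, b⟫ < 0`), the two clockwise turns `a × u ≤ 0`,
`u × b ≤ 0` would force `u₁ < 0` and `u₁ > 0` at once. The distance bound is the law of
cosines at a non-acute angle.
-/

open EuclideanGeometry

/-- Cross product of two planar vectors. -/
def cross (u v : EuclideanSpace ℝ (Fin 2)) : ℝ := u 0 * v 1 - u 1 * v 0

namespace InnerProductGeometry

variable {V : Type*} [NormedAddCommGroup V] [InnerProductSpace ℝ V]

theorem pi_div_two_le_angle_iff_inner_nonpos (x y : V) :
    Real.pi / 2 ≤ angle x y ↔ inner ℝ x y ≤ 0 := by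
  rw [angle, ← not_lt, Real.arccos_lt_pi_div_two, not_lt]
  rcases eq_or_ne x 0 with rfl | hx
  · simp
  rcases eq_or_ne y 0 with rfl | hy
  · simp
  rw [div_le_iff₀ (by positivity), zero_mul]

end InnerProductGeometry

theorem EuclideanGeometry.dist_le_dist_of_pi_div_two_le_angle {V P : Type*}
    [NormedAddCommGroup V] [InnerProductSpace ℝ V] [MetricSpace P] [NormedAddTorsor V P]
    {p₁ p₂ p₃ : P} (h : Real.pi / 2 ≤ ∠ p₁ p₂ p₃) : dist p₂ p₃ ≤ dist p₁ p₃ := by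
  have hcos : Real.cos (∠ p₁ p₂ p₃) ≤ 0 :=
    Real.cos_nonpos_of_pi_div_two_le_of_le h (by linarith [angle_le_pi p₁ p₂ p₃, Real.pi_pos])
  have hlaw := dist_sq_eq_dist_sq_add_dist_sq_sub_two_mul_dist_mul_dist_mul_cos_angle p₁ p₂ p₃
  rw [dist_comm p₂ p₃, mul_self_le_mul_self_iff dist_nonneg dist_nonneg, hlaw]
  have : 0 ≤ dist p₁ p₂ * dist p₃ p₂ := mul_nonneg dist_nonneg dist_nonneg
  nlinarith [mul_self_nonneg (dist p₁ p₂)]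

lemma real_inner_fin_two (x y : EuclideanSpace ℝ (Fin 2)) :
    inner ℝ x y = x 0 * y 0 + x 1 * y 1 := by
  simp [PiLp.inner_apply, Fin.sum_univ_two, mul_comm]

lemma coord_zero_mul_inner_add_coord_one_mul_cross (a u : EuclideanSpace ℝ (Fin 2)) :
    u 0 * inner ℝ a u + u 1 * cross a u = a 0 * inner ℝ u u := by
  simp only [real_inner_fin_two, cross]; ring

lemma coord_zero_mul_inner_sub_coord_one_mul_cross (u b : EuclideanSpace ℝ (Fin 2)) :
    u 0 * inner ℝ u b - u 1 * cross u b = b 0 * inner ℝ u u := by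
  simp only [real_inner_fin_two, cross]; ring

variable {a u b : EuclideanSpace ℝ (Fin 2)}

lemma coord_one_neg_of_inner_neg (ha : 0 < a 0) (hu : 0 ≤ u 0) (hc : cross a u ≤ 0)
    (hi : inner ℝ a u < 0) : u 1 < 0 := by
  have huu : 0 < inner ℝ u u := real_inner_self_pos.mpr (by rintro rfl; simp at hi)
  have := coord_zero_mul_inner_add_coord_one_mul_cross a u
  nlinarith [mul_pos ha huu, mul_nonpos_of_nonneg_of_nonpos hu hi.le]

lemma coord_one_pos_of_inner_neg (hb : 0 < b 0) (hu : 0 ≤ u 0) (hc : cross u b ≤ 0)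
    (hi : inner ℝ u b < 0) : 0 < u 1 := by
  have huu : 0 < inner ℝ u u := real_inner_self_pos.mpr (by rintro rfl; simp at hi)
  have := coord_zero_mul_inner_sub_coord_one_mul_cross u b
  nlinarith [mul_pos hb huu, mul_nonpos_of_nonneg_of_nonpos hu hi.le]

lemma inner_nonneg_or_inner_nonneg_of_cross_nonpos (ha : 0 < a 0) (hu : 0 ≤ u 0)
    (hb : 0 < b 0) (hau : cross a u ≤ 0) (hub : cross u b ≤ 0) :
    0 ≤ inner ℝ a u ∨ 0 ≤ inner ℝ u b := by
  by_contra! h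
  exact (coord_one_neg_of_inner_neg ha hu hau h.1).asymm
    (coord_one_pos_of_inner_neg hb hu hub h.2)

theorem stmt_1_general (p1 p p' pi : EuclideanSpace ℝ (Fin 2))
    (hx1 : p1 0 < p 0) (hx2 : p 0 ≤ p' 0) (hx3 : p' 0 < pi 0)
    (hc1 : cross (p - p1) (p' - p) ≤ 0)
    (hc2 : cross (p' - p) (pi - p') ≤ 0) :
    (Real.pi / 2 ≤ ∠ p1 p p' ∨ Real.pi / 2 ≤ ∠ p p' pi) ∧
      (dist p1 p' ≤ 1 → Real.pi / 2 ≤ ∠ p1 p p' →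
        dist p p' ≤ dist p1 p' ∧ dist p p' ≤ 1) := by
  refine ⟨?_, fun h1 hp => ⟨dist_le_dist_of_pi_div_two_le_angle hp,
    (dist_le_dist_of_pi_div_two_le_angle hp).trans h1⟩⟩
  have := inner_nonneg_or_inner_nonneg_of_cross_nonpos (sub_pos.mpr hx1)
    (sub_nonneg.mpr hx2) (sub_pos.mpr hx3) hc1 hc2
  simp only [EuclideanGeometry.angle, vsub_eq_sub,
    InnerProductGeometry.pi_div_two_le_angle_iff_inner_nonpos]
  rwa [← neg_sub p p1, ← neg_sub p' p, inner_neg_left, inner_neg_left, neg_nonpos, neg_nonpos]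

theorem stmt_1 (p1 p p' pi : EuclideanSpace ℝ (Fin 2))
    (hx1 : p1 0 < p 0) (hx2 : p 0 ≤ p' 0) (hx3 : p' 0 < pi 0)
    (hc1 : cross (p - p1) (p' - p) ≤ 0)
    (hc2 : cross (p' - p) (pi - p') ≤ 0)
    (hc3 : cross (pi - p') (p1 - pi) ≤ 0)
    (hc4 : cross (p1 - pi) (p - p1) ≤ 0) :
    (Real.pi / 2 ≤ ∠ p1 p p' ∨ Real.pi / 2 ≤ ∠ p p' pi) ∧
      (dist p1 p' ≤ 1 → Real.pi / 2 ≤ ∠ p1 p p' →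
        dist p p' ≤ dist p1 p' ∧ dist p p' ≤ 1) :=
  stmt_1_general p1 p p' pi hx1 hx2 hx3 hc1 hc2
end

section
/- Let p, p_i, p_j be points in ℝ² with x(p) < x(p_i) < x(p_j), y(p) > y(p_i) > y(p_j), such that p → p_i → p_j makes a right turn. If |p p_i| > 1 then |p p_j| > 1. -/
theorem stmt_4 (p pi pj : EuclideanSpace ℝ (Fin 2))
    (hx1 : p 0 < pi 0) (hx2 : pi 0 < pj 0)
    (hy1 : pi 1 < p 1) (hy2 : pj 1 < pi 1)
    (hcw : cross (pi - p) (pj - p) < 0)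
    (hfar : 1 < dist p pi) :
    1 < dist p pj := by
  have key : dist p pi ≤ dist p pj := by
    rw [EuclideanSpace.dist_eq, EuclideanSpace.dist_eq, Fin.sum_univ_two, Fin.sum_univ_two]
    apply Real.sqrt_le_sqrt
    simp only [Real.dist_eq, sq_abs]
    nlinarith
  linarith
end

section
/- Let p, p_i, p_j be points in ℝ² with x(p) < x(p_i) < x(p_j) and y(p_i) < y(p_j), such that p → p_i → p_j makes a right turn. If |p p_i| > 1 then |p p_j| > 1. -/
theorem stmt_5 (p pi pj : EuclideanSpace ℝ (Fin 2))
    (hx1 : p 0 < pi 0) (hx2 : pi 0 < pj 0)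
    (hy : pi 1 < pj 1)
    (hcw : cross (pi - p) (pj - p) < 0)
    (hfar : 1 < dist p pi) :
    1 < dist p pj := by
  simp only [cross, PiLp.sub_apply] at hcw
  have hd1 : dist p pi = Real.sqrt ((p 0 - pi 0)^2 + (p 1 - pi 1)^2) := by
    rw [EuclideanSpace.dist_eq]
    simp [Fin.sum_univ_two, Real.dist_eq, sq_abs]
  have hd2 : dist p pj = Real.sqrt ((p 0 - pj 0)^2 + (p 1 - pj 1)^2) := by
    rw [EuclideanSpace.dist_eq]
    simp [Fin.sum_univ_two, Real.dist_eq, sq_abs]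
  rw [hd1] at hfar
  rw [hd2]
  have h1 : (1:ℝ) < (p 0 - pi 0)^2 + (p 1 - pi 1)^2 := by
    have := (Real.lt_sqrt (by norm_num : (0:ℝ) ≤ 1)).mp hfar
    simpa using this
  rw [Real.lt_sqrt (by norm_num : (0:ℝ) ≤ 1)]
  -- a1 := pi 1 - p 1 > 0
  have ha1 : 0 < pi 1 - p 1 := by nlinarith
  have hb1 : 0 < pj 1 - p 1 := by linarith
  nlinarith [sq_nonneg (p 0 - pi 0), sq_nonneg (p 1 - pi 1)]
end

section
/- Let p*, p, p_i be points in ℝ² with x(p*) ≤ x(p) < x(p_i), y(p) ≥ y(p*), and p* → p → p_i a left turn. If |p* p_i| ≤ 1 then |p p_i| ≤ 1. -/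
theorem stmt_6 (pstar p pi : EuclideanSpace ℝ (Fin 2))
    (hx1 : pstar 0 ≤ p 0) (hx2 : p 0 < pi 0)
    (hy : pstar 1 ≤ p 1)
    (hccw : 0 < cross (p - pstar) (pi - pstar))
    (hnear : dist pstar pi ≤ 1) :
    dist p pi ≤ 1 := by
  have hc : 0 < (p 0 - pstar 0) * (pi 1 - pstar 1) - (p 1 - pstar 1) * (pi 0 - pstar 0) := by
    simpa [cross] using hccw
  have key : dist p pi ≤ dist pstar pi := by
    rw [EuclideanSpace.dist_eq, EuclideanSpace.dist_eq]
    apply Real.sqrt_le_sqrt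
    rw [Fin.sum_univ_two, Fin.sum_univ_two]
    simp only [Real.dist_eq, sq_abs]
    rcases eq_or_lt_of_le hx1 with h0 | h0
    · exfalso
      rw [h0] at hc
      nlinarith [mul_nonneg (sub_nonneg.2 hy) (sub_pos.2 hx2).le]
    · nlinarith [mul_nonneg (sub_nonneg.2 hy) hc.le,
        mul_nonneg (mul_nonneg (sub_nonneg.2 hy) (sub_nonneg.2 hy)) (sub_pos.2 hx2).le,
        mul_nonneg (mul_nonneg (sub_pos.2 h0).le (sub_pos.2 h0).le) (sub_pos.2 hx2).le,
        mul_pos (sub_pos.2 h0) (sub_pos.2 hx2)]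
  linarith
end

section
/- Let p* = (0,0), q* = (0,−1), and let p be a point with x(p) > 0, y(p) < 0, |p* p| ≤ 1, and |q* p| > 1. Then for any point p_i with x(p_i) > x(p) and |p* p_i| ≤ 1, we have |p p_i| ≤ 1. -/
theorem stmt_7 (pstar qstar p : EuclideanSpace ℝ (Fin 2))
    (hps0 : pstar 0 = 0) (hps1 : pstar 1 = 0)
    (hqs0 : qstar 0 = 0) (hqs1 : qstar 1 = -1)
    (hpx : 0 < p 0) (hpy : p 1 < 0)
    (hin : dist pstar p ≤ 1) (hout : 1 < dist qstar p) :
    ∀ pi : EuclideanSpace ℝ (Fin 2), p 0 < pi 0 → dist pstar pi ≤ 1 →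
      dist p pi ≤ 1 := by
  intro pi hx hinpi
  rw [EuclideanSpace.dist_eq] at *
  simp only [Fin.sum_univ_two, hps0, hps1, hqs0, hqs1, Real.dist_eq, sq_abs] at *
  set a := p 0; set b := p 1; set x := pi 0; set y := pi 1
  have h1 : (0-a)^2 + (0-b)^2 ≤ 1 := by
    nlinarith [Real.sq_sqrt (by positivity : (0:ℝ) ≤ (0-a)^2 + (0-b)^2),
      Real.sqrt_nonneg ((0-a)^2 + (0-b)^2)]
  have h2 : 1 < (0-a)^2 + (-1-b)^2 := by
    nlinarith [Real.sq_sqrt (by positivity : (0:ℝ) ≤ (0-a)^2 + (-1-b)^2),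
      Real.sqrt_nonneg ((0-a)^2 + (-1-b)^2)]
  have h3 : (0-x)^2 + (0-y)^2 ≤ 1 := by
    nlinarith [Real.sq_sqrt (by positivity : (0:ℝ) ≤ (0-x)^2 + (0-y)^2),
      Real.sqrt_nonneg ((0-x)^2 + (0-y)^2)]
  have hA : -2*b - b^2 < a^2 := by nlinarith
  have hb1 : -1 < b := by nlinarith
  have key : (a-x)^2 + (b-y)^2 ≤ 1 := by
    rcases le_or_gt 0 y with hy | hy
    · -- y ≥ 0 : y < 1 + b
      have hy2 : y^2 < (1+b)^2 := by nlinarith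
      have hylt : y < 1 + b := by nlinarith
      have hby : b*y > b*(1+b) := by nlinarith
      nlinarith [mul_lt_mul_of_pos_left hx hpx]
    · nlinarith [mul_lt_mul_of_pos_left hx hpx, mul_pos_of_neg_of_neg hpy hy]
  have : Real.sqrt ((a-x)^2 + (b-y)^2) ≤ Real.sqrt 1 := Real.sqrt_le_sqrt key
  simpa using this
end

section
/- Let p* = (0,0), q* = (0,−1), and let p be a point with x(p) > 0, y(p) < 0, |p* p| ≤ 1 and |q* p| > 1. Then the perpendicular bisector of the segment p* p intersects the vertical line through p at a point q3 with y(q3) strictly greater than y(q2), where q2 is the upper intersection of that vertical line with the unit circle centered at p*. -/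
lemma dist_sq_two (x y : EuclideanSpace ℝ (Fin 2)) :
    dist x y ^ 2 = (x 0 - y 0) ^ 2 + (x 1 - y 1) ^ 2 := by
  rw [EuclideanSpace.dist_eq, Real.sq_sqrt (by positivity)]
  simp [Fin.sum_univ_two, Real.dist_eq, sq_abs]

set_option maxHeartbeats 1000000 in
theorem stmt_8 (pstar qstar p : EuclideanSpace ℝ (Fin 2))
    (hps0 : pstar 0 = 0) (hps1 : pstar 1 = 0)
    (hqs0 : qstar 0 = 0) (hqs1 : qstar 1 = -1)
    (hpx : 0 < p 0) (hpy : p 1 < 0)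
    (hin : dist pstar p ≤ 1) (hout : 1 < dist qstar p) :
    ∀ q3 : EuclideanSpace ℝ (Fin 2),
      q3 0 = p 0 → dist pstar q3 = dist p q3 →
      Real.sqrt (1 - (p 0) ^ 2) < q3 1 := by
  intro q3 hx heq
  set a := p 0
  set b := p 1
  set y := q3 1
  have h1 : a ^ 2 + b ^ 2 ≤ 1 := by
    have := dist_sq_two pstar p
    nlinarith [dist_nonneg (x := pstar) (y := p), this]
  have h2 : 1 < a ^ 2 + (b + 1) ^ 2 := by
    have := dist_sq_two qstar p
    nlinarith [dist_nonneg (x := qstar) (y := p), this]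
  have h3 : a ^ 2 + y ^ 2 = (y - b) ^ 2 := by
    have e1 := dist_sq_two pstar q3
    have e2 := dist_sq_two p q3
    rw [hps0, hps1, hx] at e1
    rw [heq] at e1
    nlinarith [e1, e2]
  have ha : a ^ 2 ≤ 1 := by nlinarith
  have hs0 : 0 ≤ Real.sqrt (1 - a ^ 2) := Real.sqrt_nonneg _
  have hs : Real.sqrt (1 - a ^ 2) ^ 2 = 1 - a ^ 2 := Real.sq_sqrt (by linarith)
  set s := Real.sqrt (1 - a ^ 2)
  have hsb : 0 ≤ s + b := by nlinarith [sq_nonneg (s + b)]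
  have hpos : 0 < b + 1 + s := by linarith
  have hb1 : s < 1 + b := by nlinarith [mul_pos hpos hpos]
  by_contra hcon
  push_neg at hcon
  have hyb : 2 * y * b = b ^ 2 - a ^ 2 := by nlinarith [h3]
  nlinarith [mul_le_mul_of_nonpos_left hcon (le_of_lt hpy)]
end

section
/- Let p, q ∈ ℝ² with |pq| ≤ 1 and let L(p,q) be the lens {z : |zp| ≤ |pq|, |zq| ≤ |pq|}. The set of points of the lens on or above the line pq is a clique in the unit-disk graph, and likewise for the set of points on or below the line pq; hence any finite set of points in the lens induces a cobipartite unit-disk graph. -/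
private theorem key13 (D X Y X' Y' : ℝ) (hD : 0 ≤ D) (hY : 0 ≤ Y) (hY' : 0 ≤ Y')
    (h1 : X^2+Y^2 ≤ D^2) (h2 : X^2+Y^2 ≤ 2*X*D)
    (h3 : X'^2+Y'^2 ≤ D^2) (h4 : X'^2+Y'^2 ≤ 2*X'*D) :
    (X-X')^2 + (Y-Y')^2 ≤ D^2 := by
  have hX : 0 ≤ X := by nlinarith [sq_nonneg X, sq_nonneg Y]
  have hX' : 0 ≤ X' := by nlinarith [sq_nonneg X', sq_nonneg Y']
  have hXD : X ≤ D := by nlinarith [sq_nonneg Y]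
  have hXD' : X' ≤ D := by nlinarith [sq_nonneg Y']
  rcases le_total Y Y' with h | h
  · rcases le_total X X' with hx | hx
    · nlinarith [mul_nonneg (sub_nonneg.2 hXD) (sub_nonneg.2 hx), mul_nonneg (sub_nonneg.2 hXD) (sub_nonneg.2 hXD), mul_nonneg hY' (sub_nonneg.2 h), mul_nonneg hY hY']
    · nlinarith [mul_nonneg (sub_nonneg.2 hXD) (sub_nonneg.2 hx), mul_nonneg (sub_nonneg.2 hXD) (sub_nonneg.2 hXD'), mul_nonneg hY (sub_nonneg.2 h)]
  · rcases le_total X X' with hx | hx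
    · nlinarith [mul_nonneg (sub_nonneg.2 hXD') (sub_nonneg.2 hx), mul_nonneg (sub_nonneg.2 hXD') (sub_nonneg.2 hXD), mul_nonneg hY' (sub_nonneg.2 h)]
    · nlinarith [mul_nonneg (sub_nonneg.2 hXD') (sub_nonneg.2 hx), mul_nonneg (sub_nonneg.2 hXD') (sub_nonneg.2 hXD'), mul_nonneg hY (sub_nonneg.2 h), mul_nonneg hY hY']

private theorem alg13 (d1 d2 a1 a2 b1 b2 : ℝ)
    (h1 : a1^2+a2^2 ≤ d1^2+d2^2) (h2 : (a1-d1)^2+(a2-d2)^2 ≤ d1^2+d2^2)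
    (h3 : b1^2+b2^2 ≤ d1^2+d2^2) (h4 : (b1-d1)^2+(b2-d2)^2 ≤ d1^2+d2^2)
    (hc : 0 ≤ d1*a2 - d2*a1) (hc' : 0 ≤ d1*b2 - d2*b1) :
    (a1-b1)^2+(a2-b2)^2 ≤ d1^2+d2^2 := by
  have hDnn : (0:ℝ) ≤ d1^2+d2^2 := by positivity
  rcases eq_or_lt_of_le hDnn with h0 | h0
  · nlinarith [sq_nonneg (a1+b1), sq_nonneg (a2+b2)]
  · have hk := key13 (d1^2+d2^2) (d1*a1+d2*a2) (d1*a2-d2*a1) (d1*b1+d2*b2) (d1*b2-d2*b1)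
      hDnn hc hc'
      (by nlinarith [mul_le_mul_of_nonneg_right h1 hDnn])
      (by nlinarith [mul_le_mul_of_nonneg_right h2 hDnn])
      (by nlinarith [mul_le_mul_of_nonneg_right h3 hDnn])
      (by nlinarith [mul_le_mul_of_nonneg_right h4 hDnn])
    have h5 : ((a1-b1)^2+(a2-b2)^2) * (d1^2+d2^2) ≤ (d1^2+d2^2) * (d1^2+d2^2) := by
      nlinarith [hk]
    exact le_of_mul_le_mul_right h5 h0

private theorem dsq13 (a b : EuclideanSpace ℝ (Fin 2)) :
    dist a b ^ 2 = (a 0 - b 0)^2 + (a 1 - b 1)^2 := by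
  rw [EuclideanSpace.dist_eq, Real.sq_sqrt (by positivity)]
  simp [Fin.sum_univ_two, Real.dist_eq, sq_abs]

set_option maxHeartbeats 2000000 in
private theorem half13 (p q z z' : EuclideanSpace ℝ (Fin 2))
    (h1 : dist z p ≤ dist p q) (h2 : dist z q ≤ dist p q)
    (h3 : dist z' p ≤ dist p q) (h4 : dist z' q ≤ dist p q)
    (hc : 0 ≤ cross (q - p) (z - p)) (hc' : 0 ≤ cross (q - p) (z' - p)) :
    dist z z' ≤ dist p q := by
  have h1s := pow_le_pow_left₀ dist_nonneg h1 2
  have h2s := pow_le_pow_left₀ dist_nonneg h2 2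
  have h3s := pow_le_pow_left₀ dist_nonneg h3 2
  have h4s := pow_le_pow_left₀ dist_nonneg h4 2
  rw [dsq13, dsq13] at h1s h2s h3s h4s
  have hcz : 0 ≤ (q 0 - p 0) * (z 1 - p 1) - (q 1 - p 1) * (z 0 - p 0) := by
    simpa [cross] using hc
  have hcz' : 0 ≤ (q 0 - p 0) * (z' 1 - p 1) - (q 1 - p 1) * (z' 0 - p 0) := by
    simpa [cross] using hc'
  have halg := alg13 (q 0 - p 0) (q 1 - p 1) (z 0 - p 0) (z 1 - p 1)
    (z' 0 - p 0) (z' 1 - p 1)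
    (by nlinarith [h1s]) (by nlinarith [h2s]) (by nlinarith [h3s]) (by nlinarith [h4s])
    hcz hcz'
  have hfin : dist z z' ^ 2 ≤ dist p q ^ 2 := by
    rw [dsq13, dsq13]; nlinarith [halg]
  have := Real.sqrt_le_sqrt hfin
  rwa [Real.sqrt_sq dist_nonneg, Real.sqrt_sq dist_nonneg] at this

theorem stmt_13 (p q : EuclideanSpace ℝ (Fin 2)) (hpq : dist p q ≤ 1) :
    (∀ z z' : EuclideanSpace ℝ (Fin 2),
      dist z p ≤ dist p q → dist z q ≤ dist p q →
      dist z' p ≤ dist p q → dist z' q ≤ dist p q →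
      0 ≤ cross (q - p) (z - p) → 0 ≤ cross (q - p) (z' - p) →
      dist z z' ≤ 1) ∧
    (∀ z z' : EuclideanSpace ℝ (Fin 2),
      dist z p ≤ dist p q → dist z q ≤ dist p q →
      dist z' p ≤ dist p q → dist z' q ≤ dist p q →
      cross (q - p) (z - p) ≤ 0 → cross (q - p) (z' - p) ≤ 0 →
      dist z z' ≤ 1) := by
  constructor
  · intro z z' h1 h2 h3 h4 hc hc'
    exact le_trans (half13 p q z z' h1 h2 h3 h4 hc hc') hpq
  · intro z z' h1 h2 h3 h4 hc hc'
    have hqp : dist q p = dist p q := dist_comm q p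
    have e : ∀ w : EuclideanSpace ℝ (Fin 2),
        cross (p - q) (w - q) = - cross (q - p) (w - p) := by
      intro w; simp only [cross]; simp; ring
    have hz : 0 ≤ cross (p - q) (z - q) := by rw [e]; linarith
    have hz' : 0 ≤ cross (p - q) (z' - q) := by rw [e]; linarith
    refine le_trans (half13 q p z z' ?_ ?_ ?_ ?_ hz hz') (hqp ▸ hpq) <;>
      rw [hqp] <;> assumption
end
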